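/- arXiv:1506.02871 — 5 statements merged into one kernel-verified Lean document; each statement's English description precedes it below -/
import Mathlib

section
/- Let g be a Lie algebra of dimension 4 over a field. Then the derived algebra [g,g] is a proper ideal of g, i.e. [g,g] ≠ g. -/
/-!
Suppose `g` is perfect. Then `g` is not nilpotent, so by Engel's theorem some `ad x` is not
nilpotent, and `ad x` is traceless because every element of `g` is a sum of brackets. Hence the
eigenvalues of `ad x` form a multiset `{0, a, b, c}` with `a + b + c = 0`, not all zero.

Let `E μ` be the generalized eigenspaces of `ad x`. Since `⁅E μ, E ν⁆ ≤ E (μ + ν)`, every bracket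
lies in `(⨆ μ ≠ 0, E μ) ⊔ W` once `W` contains every `⁅E μ, E (-μ)⁆`, so perfection forces
`dim E 0 ≤ dim W`. If `0` is a simple eigenvalue, no two nonzero eigenvalues are opposite, and
`W = 0` works. Otherwise the eigenvalues are `0, 0, l, -l`. Then `E 0` is abelian: it acts on the
line `E l` by a character whose value at `x` is `l ≠ 0`, and `ad x` is nilpotent on `E 0`. So
`W = K ∙ ⁅e, u⁆` works, where `E l = K ∙ e` and `E (-l) = K ∙ u`, and `dim W ≤ 1 < 2 = dim E 0`.
-/

open Module Module.End LieAlgebra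

namespace Submodule

variable {K V : Type*} [Field K] [AddCommGroup V] [Module K V]

theorem exists_eq_span_singleton_of_finrank_eq_one {S : Submodule K V} (h : finrank K S = 1) :
    ∃ v ∈ S, v ≠ 0 ∧ S = K ∙ v := by
  obtain ⟨v, hv, hv0⟩ := S.exists_mem_ne_zero_of_ne_bot (by rintro rfl; simp at h)
  exact ⟨v, hv, hv0, eq_span_singleton_of_mem_of_finrank_eq_one h hv hv0⟩

theorem exists_eq_span_pair_of_finrank_eq_two {S : Submodule K V} (h : finrank K S = 2) {x : V}
    (hx : x ∈ S) (hx0 : x ≠ 0) : ∃ y ∈ S, y ∉ K ∙ x ∧ S = span K {x, y} := by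
  have : FiniteDimensional K S := Module.finite_of_finrank_pos (by omega)
  obtain ⟨y, hy, hyx⟩ : ∃ y ∈ S, y ∉ K ∙ x := by
    refine SetLike.not_le_iff_exists.mp fun hle => ?_
    have := finrank_mono hle
    rw [h, finrank_span_singleton hx0] at this
    omega
  have hy0 : y ≠ 0 := by rintro rfl; exact hyx (zero_mem _)
  have hdisj : Disjoint (K ∙ x) (K ∙ y) := (disjoint_span_singleton' hy0).mpr hyx
  refine ⟨y, hy, hyx, (eq_of_le_of_finrank_le ?_ ?_).symm⟩
  · rw [span_le, Set.insert_subset_iff, Set.singleton_subset_iff]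
    exact ⟨hx, hy⟩
  · have := finrank_sup_add_finrank_inf_eq (K ∙ x) (K ∙ y)
    rw [hdisj.eq_bot, finrank_bot, finrank_span_singleton hx0, finrank_span_singleton hy0] at this
    rw [span_insert, h]
    omega

end Submodule

namespace Module.End

variable {K V : Type*} [Field K] [AddCommGroup V] [Module K V]

theorem eq_of_apply_eq_smul_of_mem_maxGenEigenspace {f : End K V} {μ t : K} {v : V}
    (hv : v ∈ f.maxGenEigenspace μ) (hv0 : v ≠ 0) (h : f v = t • v) : t = μ := by
  by_contra hne
  have hvt : v ∈ f.maxGenEigenspace t :=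
    eigenspace_le_maxGenEigenspace (mem_eigenspace_iff.mpr h)
  exact hv0 ((disjoint_genEigenspace f hne ⊤ ⊤).eq_bot ▸ ⟨hvt, hv⟩ : v ∈ (⊥ : Submodule K V))

theorem eq_zero_of_apply_eq_smul_add_smul {f : End K V} {x y : V} {s t : K}
    (hx : x ∈ f.maxGenEigenspace 0) (hy : y ∈ f.maxGenEigenspace 0) (hyx : y ∉ K ∙ x)
    (hfx : f x = 0) (hfy : f y = s • x + t • y) : t = 0 := by
  by_contra ht
  -- otherwise `t • y + s • x` would be an eigenvector for the eigenvalue `t`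
  refine ht (eq_of_apply_eq_smul_of_mem_maxGenEigenspace (v := t • y + s • x)
    (add_mem (Submodule.smul_mem _ _ hy) (Submodule.smul_mem _ _ hx)) (fun h0 => hyx ?_) ?_)
  · rw [add_eq_zero_iff_eq_neg, ← neg_smul] at h0
    rw [← Submodule.smul_mem_iff _ ht, h0]
    exact Submodule.smul_mem _ _ (Submodule.mem_span_singleton_self x)
  · rw [map_add, map_smul, map_smul, hfx, hfy]
    module

theorem apply_eq_smul_of_finrank_maxGenEigenspace_eq_one {f : End K V} {μ : K}
    (h : finrank K (f.maxGenEigenspace μ) = 1) {v : V} (hv : v ∈ f.maxGenEigenspace μ) :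
    f v = μ • v := by
  rcases eq_or_ne v 0 with rfl | hv0
  · simp
  have hfv := mapsTo_maxGenEigenspace_of_comm (Commute.refl f) μ hv
  rw [eq_span_singleton_of_mem_of_finrank_eq_one h hv hv0] at hfv
  obtain ⟨c, hc⟩ := Submodule.mem_span_singleton.mp hfv
  rw [← hc, eq_of_apply_eq_smul_of_mem_maxGenEigenspace hv hv0 hc.symm]

variable [FiniteDimensional K V]

section DecidableEq

variable [DecidableEq K]

theorem finrank_maxGenEigenspace_eq_count_roots (f : End K V) (μ : K) :
    finrank K (f.maxGenEigenspace μ) = f.charpoly.roots.count μ := by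
  rw [Polynomial.count_roots, LinearMap.finrank_maxGenEigenspace_eq]

theorem maxGenEigenspace_eq_bot_iff_notMem_roots (f : End K V) (μ : K) :
    f.maxGenEigenspace μ = ⊥ ↔ μ ∉ f.charpoly.roots := by
  rw [← Submodule.finrank_eq_zero, finrank_maxGenEigenspace_eq_count_roots, Multiset.count_eq_zero]

end DecidableEq

variable [IsAlgClosed K]

theorem card_roots_charpoly (f : End K V) : f.charpoly.roots.card = finrank K V := by
  rw [IsAlgClosed.card_roots_eq_natDegree, LinearMap.charpoly_natDegree]

theorem exists_mem_roots_charpoly_ne_zero {f : End K V} (hf : ¬IsNilpotent f) :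
    ∃ μ ∈ f.charpoly.roots, μ ≠ 0 := by
  classical
  by_contra! h
  refine hf (((LinearMap.charpoly_nilpotent_tfae f).out 0 3).mpr ?_)
  rw [← LinearMap.finrank_maxGenEigenspace_zero_eq, finrank_maxGenEigenspace_eq_count_roots,
    ← card_roots_charpoly, Multiset.count_eq_card]
  exact fun μ hμ => (h μ hμ).symm

end Module.End

namespace Multiset

theorem exists_eq_zero_zero_neg_of_two_le_count_zero {A : Type*} [AddCommGroup A] [DecidableEq A]
    {s : Multiset A} (hcard : s.card = 4) (hsum : s.sum = 0) (h0 : 2 ≤ s.count 0)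
    (hne : ∃ μ ∈ s, μ ≠ 0) : ∃ l ≠ 0, s = {0, 0, l, -l} := by
  obtain ⟨t, rfl⟩ := le_iff_exists_add.mp (le_count_iff_replicate_le.mp h0)
  obtain ⟨a, b, rfl⟩ := card_eq_two.mp (by simpa using hcard : t.card = 2)
  have hb : b = -a := by simpa [eq_neg_iff_add_eq_zero, add_comm] using hsum
  subst hb
  refine ⟨a, fun ha => ?_, rfl⟩
  obtain ⟨μ, hμ, hμ0⟩ := hne
  exact hμ0 (by simpa [ha] using hμ)

theorem neg_notMem_of_count_zero_eq_one {K : Type*} [Field K] [CharZero K] [DecidableEq K]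
    {s : Multiset K} (hcard : s.card = 4) (hsum : s.sum = 0) (h0 : s.count 0 = 1)
    {μ : K} (hμ : μ ∈ s) (hμ0 : μ ≠ 0) : -μ ∉ s := by
  obtain ⟨t, rfl⟩ := exists_cons_of_mem (count_pos.mp (h0 ▸ one_pos : 0 < s.count 0))
  obtain ⟨a, b, c, rfl⟩ := card_eq_three.mp (by simpa using hcard : t.card = 3)
  simp only [insert_eq_cons, count_cons_self, Nat.add_eq_right, count_eq_zero, mem_cons,
    mem_singleton, not_or, sum_cons, sum_singleton, zero_add, neg_eq_zero] at h0 hsum hμ ⊢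
  grind

end Multiset

namespace LieAlgebra

variable {K L : Type*} [Field K] [LieRing L] [LieAlgebra K L]

theorem eq_top_of_forall_lie_mem (hperf : ⁅(⊤ : LieIdeal K L), (⊤ : LieIdeal K L)⁆ = ⊤)
    {V : Submodule K L} (hV : ∀ a b : L, ⁅a, b⁆ ∈ V) : V = ⊤ := by
  rw [eq_top_iff, ← LieSubmodule.top_toSubmodule (R := K) (L := L) (M := L), ← hperf,
    LieSubmodule.lieIdeal_oper_eq_linear_span', Submodule.span_le]
  rintro _ ⟨a, -, b, -, rfl⟩
  exact hV a b

theorem trace_ad_eq_zero [FiniteDimensional K L]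
    (hperf : ⁅(⊤ : LieIdeal K L), (⊤ : LieIdeal K L)⁆ = ⊤) (x : L) :
    LinearMap.trace K L (ad K L x) = 0 :=
  LieModule.trace_toEnd_eq_zero_of_mem_lcs K L L le_rfl (k := 1) (by
    rw [LieModule.lowerCentralSeries_succ, LieModule.lowerCentralSeries_zero, hperf]
    exact LieSubmodule.mem_top x)

theorem exists_not_isNilpotent_ad [FiniteDimensional K L] [Nontrivial L]
    (hperf : ⁅(⊤ : LieIdeal K L), (⊤ : LieIdeal K L)⁆ = ⊤) :
    ∃ x : L, ¬IsNilpotent (ad K L x) := by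
  by_contra! h
  have : LieRing.IsNilpotent L := (isNilpotent_iff_forall (R := K)).mpr h
  exact (derivedSeries_lt_top_of_solvable K L).ne hperf

theorem lie_mem_span_singleton_lie {e u a b : L} (ha : a ∈ K ∙ e) (hb : b ∈ K ∙ u) :
    ⁅a, b⁆ ∈ K ∙ ⁅e, u⁆ := by
  obtain ⟨s, rfl⟩ := Submodule.mem_span_singleton.mp ha
  obtain ⟨t, rfl⟩ := Submodule.mem_span_singleton.mp hb
  rw [smul_lie, lie_smul, smul_smul]
  exact Submodule.smul_mem _ _ (Submodule.mem_span_singleton_self _)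

theorem lie_eq_zero_of_finrank_eq_one {V : Submodule K L} (hV : finrank K V = 1) {a b : L}
    (ha : a ∈ V) (hb : b ∈ V) : ⁅a, b⁆ = 0 := by
  obtain ⟨v, -, -, rfl⟩ := Submodule.exists_eq_span_singleton_of_finrank_eq_one hV
  simpa using lie_mem_span_singleton_lie ha hb

theorem lie_lie_eq_zero_of_lie_mem_span_singleton {a b e : L} (ha : ⁅a, e⁆ ∈ K ∙ e)
    (hb : ⁅b, e⁆ ∈ K ∙ e) : ⁅⁅a, b⁆, e⁆ = 0 := by
  obtain ⟨s, hs⟩ := Submodule.mem_span_singleton.mp ha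
  obtain ⟨t, ht⟩ := Submodule.mem_span_singleton.mp hb
  rw [lie_lie, ← hs, ← ht, lie_smul, lie_smul, ← hs, ← ht, smul_smul, smul_smul, mul_comm,
    sub_self]

theorem lie_mem_maxGenEigenspace_ad {x a b : L} {μ ν : K}
    (ha : a ∈ (ad K L x).maxGenEigenspace μ) (hb : b ∈ (ad K L x).maxGenEigenspace ν) :
    ⁅a, b⁆ ∈ (ad K L x).maxGenEigenspace (μ + ν) :=
  LieModule.lie_mem_maxGenEigenspace_toEnd ha hb

theorem self_mem_maxGenEigenspace_zero_ad (x : L) : x ∈ (ad K L x).maxGenEigenspace 0 :=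
  eigenspace_le_maxGenEigenspace (mem_eigenspace_iff.mpr (by simp))

theorem zero_mem_roots_charpoly_ad [FiniteDimensional K L] [DecidableEq K] {x : L} (hx : x ≠ 0) :
    0 ∈ (ad K L x).charpoly.roots := by
  by_contra h
  rw [← maxGenEigenspace_eq_bot_iff_notMem_roots] at h
  simpa [h, hx] using self_mem_maxGenEigenspace_zero_ad (K := K) x

theorem lie_eq_zero_of_mem_maxGenEigenspace_zero {x : L} {l : K} (hl : l ≠ 0)
    (h₀ : finrank K ((ad K L x).maxGenEigenspace 0) = 2)
    (h₁ : finrank K ((ad K L x).maxGenEigenspace l) = 1) {a b : L}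
    (ha : a ∈ (ad K L x).maxGenEigenspace 0) (hb : b ∈ (ad K L x).maxGenEigenspace 0) :
    ⁅a, b⁆ = 0 := by
  set E := (ad K L x).maxGenEigenspace
  have hx := self_mem_maxGenEigenspace_zero_ad (K := K) x
  obtain ⟨e, he, he0, hEl⟩ := Submodule.exists_eq_span_singleton_of_finrank_eq_one h₁
  have hxe : ⁅x, e⁆ = l • e := apply_eq_smul_of_finrank_maxGenEigenspace_eq_one h₁ he
  have hx0 : x ≠ 0 := by
    rintro rfl
    simp [hl, he0, eq_comm (a := (0 : L))] at hxe
  -- `E 0` acts on the line `E l` by scalars, so commutators in `E 0` annihilate `e`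
  have hcomm : ∀ y ∈ E 0, ⁅⁅x, y⁆, e⁆ = 0 := by
    intro y hy
    have hyl : ⁅y, e⁆ ∈ E l := by simpa only [zero_add] using lie_mem_maxGenEigenspace_ad hy he
    rw [hEl] at hyl
    exact lie_lie_eq_zero_of_lie_mem_span_singleton
      (hxe ▸ Submodule.smul_mem _ _ (Submodule.mem_span_singleton_self e)) hyl
  obtain ⟨y, hy, hyx, hE₀⟩ := Submodule.exists_eq_span_pair_of_finrank_eq_two h₀ hx hx0
  have hxy : ⁅x, y⁆ = 0 := by
    have hxy₀ : ⁅x, y⁆ ∈ E 0 := by simpa only [zero_add] using lie_mem_maxGenEigenspace_ad hx hy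
    rw [hE₀] at hxy₀
    obtain ⟨s, t, hst⟩ := Submodule.mem_span_pair.mp hxy₀
    have ht : t = 0 :=
      eq_zero_of_apply_eq_smul_add_smul hx hy hyx (lie_self x) (by rw [ad_apply, hst])
    have hs : s = 0 := by
      have := hcomm y hy
      rw [← hst, ht, zero_smul, add_zero, smul_lie, hxe, smul_smul, smul_eq_zero] at this
      simpa [hl, he0] using this
    rw [← hst, hs, ht, zero_smul, zero_smul, add_zero]
  rw [hE₀] at ha hb
  obtain ⟨α, β, rfl⟩ := Submodule.mem_span_pair.mp ha
  obtain ⟨γ, δ, rfl⟩ := Submodule.mem_span_pair.mp hb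
  simp [← lie_skew y x, hxy]

variable [IsAlgClosed K] [FiniteDimensional K L]

theorem lie_mem_of_forall_lie_maxGenEigenspace_mem (x : L) {V : Submodule K L}
    (h : ∀ μ ν, ∀ a ∈ (ad K L x).maxGenEigenspace μ, ∀ b ∈ (ad K L x).maxGenEigenspace ν,
      ⁅a, b⁆ ∈ V) (a b : L) : ⁅a, b⁆ ∈ V := by
  have hsup := (ad K L x).iSup_maxGenEigenspace_eq_top
  have ha : a ∈ ⨆ μ, (ad K L x).maxGenEigenspace μ := hsup ▸ Submodule.mem_top
  have hb : b ∈ ⨆ μ, (ad K L x).maxGenEigenspace μ := hsup ▸ Submodule.mem_top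
  induction ha using Submodule.iSup_induction' with
  | mem μ a ha =>
    induction hb using Submodule.iSup_induction' with
    | mem ν b hb => exact h μ ν a ha b hb
    | zero => simp
    | add b₁ b₂ _ _ h₁ h₂ => rw [lie_add]; exact V.add_mem h₁ h₂
  | zero => simp
  | add a₁ a₂ _ _ h₁ h₂ => rw [add_lie]; exact V.add_mem h₁ h₂

theorem finrank_maxGenEigenspace_zero_le
    (hperf : ⁅(⊤ : LieIdeal K L), (⊤ : LieIdeal K L)⁆ = ⊤) (x : L) {W : Submodule K L}
    (hW : ∀ μ, ∀ a ∈ (ad K L x).maxGenEigenspace μ, ∀ b ∈ (ad K L x).maxGenEigenspace (-μ),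
      ⁅a, b⁆ ∈ W) :
    finrank K ((ad K L x).maxGenEigenspace 0) ≤ finrank K W := by
  set E := (ad K L x).maxGenEigenspace
  set m := ⨆ μ, ⨆ (_ : μ ≠ 0), E μ
  have hcompl : IsCompl (E 0) m :=
    ⟨(ad K L x).independent_maxGenEigenspace 0, codisjoint_iff.mpr <| by
      rw [← iSup_split_single E 0]; exact (ad K L x).iSup_maxGenEigenspace_eq_top⟩
  have htop : m ⊔ W = ⊤ := by
    refine eq_top_of_forall_lie_mem hperf (lie_mem_of_forall_lie_maxGenEigenspace_mem x ?_)
    intro μ ν a ha b hb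
    rcases eq_or_ne (μ + ν) 0 with hμν | hμν
    · rw [eq_neg_of_add_eq_zero_right hμν] at hb
      exact Submodule.mem_sup_right (hW μ a ha b hb)
    · exact Submodule.mem_sup_left <|
        (le_iSup₂_of_le (μ + ν) hμν le_rfl : E (μ + ν) ≤ m) (lie_mem_maxGenEigenspace_ad ha hb)
  have h₁ := Submodule.finrank_add_le_finrank_add_finrank m W
  have h₂ := Submodule.finrank_add_eq_of_isCompl hcompl
  rw [htop, finrank_top] at h₁
  omega

variable [DecidableEq K]

theorem exists_neg_mem_roots_charpoly_ad
    (hperf : ⁅(⊤ : LieIdeal K L), (⊤ : LieIdeal K L)⁆ = ⊤) (x : L)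
    (h : (ad K L x).charpoly.roots.count 0 = 1) :
    ∃ μ ≠ 0, μ ∈ (ad K L x).charpoly.roots ∧ -μ ∈ (ad K L x).charpoly.roots := by
  by_contra! hopp
  have h₀ : finrank K ((ad K L x).maxGenEigenspace 0) = 1 := by
    rw [finrank_maxGenEigenspace_eq_count_roots, h]
  have hle := finrank_maxGenEigenspace_zero_le hperf x (W := ⊥) fun μ a ha b hb => ?_
  · rw [h₀, finrank_bot] at hle
    omega
  rw [Submodule.mem_bot]
  rcases eq_or_ne μ 0 with rfl | hμ
  · rw [neg_zero] at hb
    exact lie_eq_zero_of_finrank_eq_one h₀ ha hb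
  by_cases hμr : μ ∈ (ad K L x).charpoly.roots
  · rw [(maxGenEigenspace_eq_bot_iff_notMem_roots _ _).mpr (hopp μ hμ hμr),
      Submodule.mem_bot] at hb
    rw [hb, lie_zero]
  · rw [(maxGenEigenspace_eq_bot_iff_notMem_roots _ _).mpr hμr, Submodule.mem_bot] at ha
    rw [ha, zero_lie]

theorem roots_charpoly_ad_ne [CharZero K]
    (hperf : ⁅(⊤ : LieIdeal K L), (⊤ : LieIdeal K L)⁆ = ⊤) (x : L) {l : K} (hl : l ≠ 0) :
    (ad K L x).charpoly.roots ≠ {0, 0, l, -l} := by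
  intro hs
  have hrank (μ : K) :
      finrank K ((ad K L x).maxGenEigenspace μ) = Multiset.count μ {0, 0, l, -l} :=
    hs ▸ finrank_maxGenEigenspace_eq_count_roots _ μ
  have hnl : -l ≠ l := fun h => hl (by linear_combination -h / 2)
  have h₀ : finrank K ((ad K L x).maxGenEigenspace 0) = 2 := by simp [hrank, hl, hl.symm]
  have h₁ : finrank K ((ad K L x).maxGenEigenspace l) = 1 := by simp [hrank, hl, hnl.symm]
  have h₂ : finrank K ((ad K L x).maxGenEigenspace (-l)) = 1 := by simp [hrank, hl, hnl]
  obtain ⟨e, -, -, hEl⟩ := Submodule.exists_eq_span_singleton_of_finrank_eq_one h₁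
  obtain ⟨u, -, -, hEnl⟩ := Submodule.exists_eq_span_singleton_of_finrank_eq_one h₂
  have hle := finrank_maxGenEigenspace_zero_le hperf x (W := K ∙ ⁅e, u⁆) fun μ a ha b hb => ?_
  · have := finrank_span_le_card (R := K) ({⁅e, u⁆} : Set L)
    simp only [Set.toFinset_singleton, Finset.card_singleton] at this
    omega
  by_cases hμ : μ = 0 ∨ μ = l ∨ μ = -l
  · rcases hμ with rfl | rfl | rfl
    · rw [neg_zero] at hb
      simp [lie_eq_zero_of_mem_maxGenEigenspace_zero hl h₀ h₁ ha hb]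
    · rw [hEl] at ha
      rw [hEnl] at hb
      exact lie_mem_span_singleton_lie ha hb
    · rw [hEnl] at ha
      rw [neg_neg, hEl] at hb
      rw [← lie_skew a b]
      exact neg_mem (lie_mem_span_singleton_lie hb ha)
  · have : (ad K L x).maxGenEigenspace μ = ⊥ :=
      (maxGenEigenspace_eq_bot_iff_notMem_roots _ _).mpr (by simpa [hs] using hμ)
    rw [this, Submodule.mem_bot] at ha
    simp [ha]

end LieAlgebra

/-- For a 4-dimensional complex Lie algebra `g`, the derived algebra ⁅g,g⁆ is a proper
ideal of `g`. -/
theorem stmt3 (g : Type*) [LieRing g] [LieAlgebra ℂ g] [FiniteDimensional ℂ g]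
    (hdim : Module.finrank ℂ g = 4) :
    ⁅(⊤ : LieIdeal ℂ g), (⊤ : LieIdeal ℂ g)⁆ ≠ ⊤ := by
  intro hperf
  have : Nontrivial g := Module.nontrivial_of_finrank_pos (R := ℂ) (by omega)
  obtain ⟨x, hx⟩ := exists_not_isNilpotent_ad hperf
  have hx0 : x ≠ 0 := by rintro rfl; exact hx (by simp)
  set s := (ad ℂ g x).charpoly.roots
  have hcard : s.card = 4 := (card_roots_charpoly _).trans hdim
  have hsum : s.sum = 0 := by
    rw [← trace_eq_sum_roots_charpoly_of_splits (IsAlgClosed.splits _), trace_ad_eq_zero hperf]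
  have h0 := Multiset.one_le_count_iff_mem.mpr (zero_mem_roots_charpoly_ad (K := ℂ) hx0)
  rcases h0.eq_or_lt with h1 | h2
  · obtain ⟨μ, hμ0, hμ, hμneg⟩ := exists_neg_mem_roots_charpoly_ad hperf x h1.symm
    exact Multiset.neg_notMem_of_count_zero_eq_one hcard hsum h1.symm hμ hμ0 hμneg
  · obtain ⟨l, hl, hs⟩ := Multiset.exists_eq_zero_zero_neg_of_two_le_count_zero hcard hsum h2
      (exists_mem_roots_charpoly_ne_zero hx)
    exact roots_charpoly_ad_ne hperf x hl hs
end

section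
/- Let V₄ be a 4-dimensional vector space with a 2-dimensional subspace U, and suppose a skew bracket ω on V₄ takes values in U and vanishes on ∧²U, inducing τ : V₄/U → End(U) via ω(T,A) = τ(T̄)(A) for T ∈ V₄, A ∈ U. Then ω satisfies the Jacobi identity if and only if the composition ∧²(V₄/U) → ∧²End(U) → sl(U) induced by τ followed by the commutator bracket vanishes, i.e. if and only if [τ(x), τ(y)] = 0 in End(U) for all x, y ∈ V₄/U. -/
private def Jac {V : Type*} [AddCommGroup V] [Module ℂ V]
    (ω : V →ₗ[ℂ] V →ₗ[ℂ] V) (x y z : V) : V :=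
  ω (ω x y) z + ω (ω y z) x + ω (ω z x) y

private lemma Jac_cyc {V : Type*} [AddCommGroup V] [Module ℂ V]
    (ω : V →ₗ[ℂ] V →ₗ[ℂ] V) (x y z : V) : Jac ω x y z = Jac ω y z x := by
  simp only [Jac]; abel

private lemma Jac_add₃ {V : Type*} [AddCommGroup V] [Module ℂ V]
    (ω : V →ₗ[ℂ] V →ₗ[ℂ] V) (x y u v : V) :
    Jac ω x y (u + v) = Jac ω x y u + Jac ω x y v := by
  simp only [Jac, map_add, LinearMap.add_apply]; abel

private lemma Jac_smul₃ {V : Type*} [AddCommGroup V] [Module ℂ V]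
    (ω : V →ₗ[ℂ] V →ₗ[ℂ] V) (c : ℂ) (x y u : V) :
    Jac ω x y (c • u) = c • Jac ω x y u := by
  simp only [Jac, map_smul, LinearMap.smul_apply, smul_add]

private lemma Jac_self₁₃ {V : Type*} [AddCommGroup V] [Module ℂ V]
    (ω : V →ₗ[ℂ] V →ₗ[ℂ] V) (hskew : ∀ x y : V, ω x y = - ω y x)
    (hxx : ∀ x : V, ω x x = 0) (x y : V) : Jac ω x y x = 0 := by
  unfold Jac
  rw [hskew y x, hxx x]
  simp only [map_neg, LinearMap.neg_apply, map_zero, LinearMap.zero_apply]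
  abel

private lemma Jac_self₂₃ {V : Type*} [AddCommGroup V] [Module ℂ V]
    (ω : V →ₗ[ℂ] V →ₗ[ℂ] V) (hskew : ∀ x y : V, ω x y = - ω y x)
    (hxx : ∀ x : V, ω x x = 0) (x y : V) : Jac ω x y y = 0 := by
  unfold Jac
  rw [hxx y, hskew y x]
  simp only [map_neg, LinearMap.neg_apply, map_zero, LinearMap.zero_apply]
  abel

/-- For a skew bracket ω on a 4-dimensional space with values in a 2-dimensional
subspace U, vanishing on ∧²U and inducing τ : V/U → End U, the Jacobi identity holds
iff ⁅τ x, τ y⁆ = 0 for all x, y in V/U. -/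
theorem stmt6 (V : Type*) [AddCommGroup V] [Module ℂ V] [FiniteDimensional ℂ V]
    (hdim : Module.finrank ℂ V = 4) (U : Submodule ℂ V) (hU : Module.finrank ℂ U = 2)
    (ω : V →ₗ[ℂ] V →ₗ[ℂ] V) (hskew : ∀ x y : V, ω x y = - ω y x)
    (hval : ∀ x y : V, ω x y ∈ U) (hvan : ∀ a b : U, ω a b = 0)
    (τ : (V ⧸ U) →ₗ[ℂ] Module.End ℂ U)
    (hτ : ∀ (x : V) (a : U), ω x a = τ (Submodule.Quotient.mk x) a) :
    (∀ x y z : V, ω (ω x y) z + ω (ω y z) x + ω (ω z x) y = 0) ↔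
      ∀ p q : V ⧸ U, ⁅τ p, τ q⁆ = 0 := by
  have hxx : ∀ x : V, ω x x = 0 := by
    intro x
    have h2 : ω x x + ω x x = 0 := by nth_rewrite 2 [hskew x x]; exact add_neg_cancel _
    have h3 : (2 : ℂ) • ω x x = 0 := by rw [two_smul]; exact h2
    rcases smul_eq_zero.mp h3 with h | h
    · exact absurd h two_ne_zero
    · exact h
  have base : ∀ (x y : V) (a : U),
      Jac ω x y (↑a) =
        (↑(τ (Submodule.Quotient.mk y) (τ (Submodule.Quotient.mk x) a)) : V)
        - ↑(τ (Submodule.Quotient.mk x) (τ (Submodule.Quotient.mk y) a)) := by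
    intro x y a
    have e1 : ω (ω x y) ↑a = 0 := hvan ⟨ω x y, hval x y⟩ a
    have e2 : ω (ω y ↑a) x
        = -(↑(τ (Submodule.Quotient.mk x) (τ (Submodule.Quotient.mk y) a)) : V) := by
      rw [hτ y a, hskew, hτ x]
    have e3 : ω (ω ↑a x) y
        = (↑(τ (Submodule.Quotient.mk y) (τ (Submodule.Quotient.mk x) a)) : V) := by
      rw [hskew (↑a) x, hτ x a, map_neg, LinearMap.neg_apply, hskew, hτ y, neg_neg]
    unfold Jac
    rw [e1, e2, e3]
    abel
  constructor
  · intro hJ p q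
    obtain ⟨x, rfl⟩ := Submodule.Quotient.mk_surjective U p
    obtain ⟨y, rfl⟩ := Submodule.Quotient.mk_surjective U q
    ext a
    have h : Jac ω x y ↑a = 0 := hJ x y ↑a
    rw [base x y a, sub_eq_zero] at h
    have h2 : τ (Submodule.Quotient.mk y) (τ (Submodule.Quotient.mk x) a)
        = τ (Submodule.Quotient.mk x) (τ (Submodule.Quotient.mk y) a) := Subtype.ext h
    simp only [Ring.lie_def, LinearMap.sub_apply, Module.End.mul_apply, LinearMap.zero_apply]
    simp [h2]
  · intro hc x y z
    have keyU : ∀ (x y : V) (a : U), Jac ω x y ↑a = 0 := by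
      intro x y a
      rw [base x y a, sub_eq_zero]
      have h := hc (Submodule.Quotient.mk x) (Submodule.Quotient.mk y)
      have h' := DFunLike.congr_fun h a
      simp only [Ring.lie_def, LinearMap.sub_apply, Module.End.mul_apply,
        LinearMap.zero_apply] at h'
      rw [sub_eq_zero] at h'
      exact congrArg _ h'.symm
    have main : ∀ (x y z : V) (c d e : ℂ), e ≠ 0 → c • x + d • y + e • z ∈ U →
        Jac ω x y z = 0 := by
      intro x y z c d e he hm
      have h0 : Jac ω x y (c • x + d • y + e • z) = 0 := keyU x y ⟨_, hm⟩
      rw [Jac_add₃, Jac_add₃, Jac_smul₃, Jac_smul₃, Jac_smul₃,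
        Jac_self₁₃ ω hskew hxx, Jac_self₂₃ ω hskew hxx] at h0
      simp only [smul_zero, zero_add] at h0
      exact (smul_eq_zero.mp h0).resolve_left he
    have hq2 : Module.finrank ℂ (V ⧸ U) = 2 := by
      have h := Submodule.finrank_quotient_add_finrank U
      omega
    have hni : ¬ LinearIndependent ℂ
        ![Submodule.Quotient.mk x, Submodule.Quotient.mk y,
          (Submodule.Quotient.mk z : V ⧸ U)] := by
      intro h
      have hcard := h.fintype_card_le_finrank
      rw [Fintype.card_fin, hq2] at hcard
      omega
    obtain ⟨g, hg, i, hi⟩ := Fintype.not_linearIndependent_iff.mp hni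
    rw [Fin.sum_univ_three] at hg
    simp only [Matrix.cons_val_zero, Matrix.cons_val_one, Matrix.head_cons,
      Matrix.cons_val_two, Matrix.tail_cons] at hg
    have hmem : g 0 • x + g 1 • y + g 2 • z ∈ U := by
      rw [← Submodule.Quotient.mk_eq_zero]
      simpa [Submodule.Quotient.mk_add, Submodule.Quotient.mk_smul] using hg
    have goal : Jac ω x y z = 0 := by
      fin_cases i
      · have hm' : g 1 • y + g 2 • z + g 0 • x ∈ U := by
          have : g 1 • y + g 2 • z + g 0 • x = g 0 • x + g 1 • y + g 2 • z := by abel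
          rw [this]; exact hmem
        rw [Jac_cyc]
        exact main y z x (g 1) (g 2) (g 0) hi hm'
      · have hm' : g 2 • z + g 0 • x + g 1 • y ∈ U := by
          have : g 2 • z + g 0 • x + g 1 • y = g 0 • x + g 1 • y + g 2 • z := by abel
          rw [this]; exact hmem
        rw [Jac_cyc, Jac_cyc]
        exact main z x y (g 2) (g 0) (g 1) hi hm'
      · exact main x y z (g 0) (g 1) (g 2) hi hmem
    exact goal
end

section
/- For a 3-dimensional vector space V₃ with a fixed nonzero element θ of ∧³V₃*, the induced isomorphism ∧²V₃ ≅ V₃* gives an identification Hom(∧²V₃, V₃) ≅ V₃ ⊗ V₃ ≅ Sym²V₃ ⊕ ∧²V₃, and under this identification a bracket ω = q + u (with q ∈ Sym²V₃ symmetric and u corresponding to a linear form) satisfies the Jacobi identity if and only if the contraction of q with u vanishes. -/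
set_option maxHeartbeats 4000000

private lemma key14 (Q : Matrix (Fin 3) (Fin 3) ℂ) (hQ : Q.transpose = Q)
    (u x y z : Fin 3 → ℂ) (i : Fin 3) :
    (Q.mulVec (crossProduct (Q.mulVec (crossProduct x y) + crossProduct u (crossProduct x y)) z)
      + crossProduct u (crossProduct (Q.mulVec (crossProduct x y) + crossProduct u (crossProduct x y)) z)
      + (Q.mulVec (crossProduct (Q.mulVec (crossProduct y z) + crossProduct u (crossProduct y z)) x)
      + crossProduct u (crossProduct (Q.mulVec (crossProduct y z) + crossProduct u (crossProduct y z)) x))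
      + (Q.mulVec (crossProduct (Q.mulVec (crossProduct z x) + crossProduct u (crossProduct z x)) y)
      + crossProduct u (crossProduct (Q.mulVec (crossProduct z x) + crossProduct u (crossProduct z x)) y))) i
    = -2 * (x 0 * (y 1 * z 2 - y 2 * z 1) - x 1 * (y 0 * z 2 - y 2 * z 0)
        + x 2 * (y 0 * z 1 - y 1 * z 0)) * Q.mulVec u i := by
  have e10 : Q 1 0 = Q 0 1 := congrFun (congrFun hQ _) _
  have e20 : Q 2 0 = Q 0 2 := congrFun (congrFun hQ _) _
  have e21 : Q 2 1 = Q 1 2 := congrFun (congrFun hQ _) _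
  fin_cases i <;>
    simp only [Fin.zero_eta, Fin.mk_one, show (⟨2, by omega⟩ : Fin 3) = 2 from rfl, cross_apply, Matrix.mulVec, dotProduct, Fin.sum_univ_three, Pi.add_apply,
      Matrix.cons_val_zero, Matrix.cons_val_one, Matrix.head_cons, Matrix.cons_val_two,
      Matrix.tail_cons, Fin.isValue, e10, e20, e21] <;> ring

/-- On V₃ = ℂ³ with θ the determinant form, a skew bracket corresponds to a matrix
Q + (skew part given by u); the bracket b x y = Q(x×y) + u×(x×y) satisfies the Jacobi
identity iff the contraction Q·u vanishes. -/
theorem stmt14 (Q : Matrix (Fin 3) (Fin 3) ℂ) (hQ : Q.transpose = Q) (u : Fin 3 → ℂ) :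
    let b : (Fin 3 → ℂ) → (Fin 3 → ℂ) → (Fin 3 → ℂ) := fun x y =>
      Q.mulVec (crossProduct x y) + crossProduct u (crossProduct x y)
    (∀ x y z : Fin 3 → ℂ, b (b x y) z + b (b y z) x + b (b z x) y = 0) ↔
      Q.mulVec u = 0 := by
  intro b
  constructor
  · intro h
    funext i
    have := congrFun (h ![1,0,0] ![0,1,0] ![0,0,1]) i
    rw [show (b (b ![1,0,0] ![0,1,0]) ![0,0,1] + b (b ![0,1,0] ![0,0,1]) ![1,0,0]
        + b (b ![0,0,1] ![1,0,0]) ![0,1,0]) i = _ from key14 Q hQ u _ _ _ i] at this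
    simp at this
    simpa using this
  · intro h x y z
    funext i
    rw [show (b (b x y) z + b (b y z) x + b (b z x) y) i = _ from key14 Q hQ u x y z i, h]
    simp
end

section
/- Let V₃ be 3-dimensional with fixed θ ∈ ∧³V₃* nonzero, and let q ∈ Sym²V₃ be a symmetric tensor of rank 1. Then the Lie algebra structure on V₃ defined by the bracket corresponding to q is isomorphic to the Heisenberg algebra he₃. -/
/-!
The bracket is `b x y = (v ⬝ (x × y)) v = det(v, x, y) v`. It vanishes as soon as one argument
is `v`, so any `X`, `Y` with `det(v, X, Y) = 1` give a basis `X, Y, v` with the Heisenberg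
relations. To find them, take `X` independent of `v`, so that `v × X ≠ 0`, and `Y` with
`(v × X) ⬝ Y = 1`.
-/

open Matrix

lemma vecMulVec_self_mulVec {R : Type*} [CommRing R] (v x : Fin 3 → R) :
    vecMulVec v v *ᵥ x = (v ⬝ᵥ x) • v := by
  rw [vecMulVec_mulVec, op_smul_eq_smul]

lemma vecMulVec_self_mulVec_cross_self {R : Type*} [CommRing R] (v x : Fin 3 → R) :
    vecMulVec v v *ᵥ (x ⨯₃ v) = 0 := by
  rw [vecMulVec_self_mulVec, dot_cross_self, zero_smul]

section

variable {K : Type*} [Field K]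

lemma exists_dotProduct_eq_one {n : Type*} [Fintype n] [DecidableEq n] {w : n → K}
    (hw : w ≠ 0) : ∃ y, w ⬝ᵥ y = 1 := by
  obtain ⟨i, hi⟩ := Function.ne_iff.mp hw
  exact ⟨Pi.single i (w i)⁻¹, by rw [dotProduct_single, mul_inv_cancel₀ hi]⟩

lemma exists_dotProduct_cross_eq_one {v : Fin 3 → K} (hv : v ≠ 0) :
    ∃ x y, v ⬝ᵥ x ⨯₃ y = 1 := by
  obtain ⟨x, hx⟩ := exists_linearIndependent_pair_of_one_lt_finrank
    (by rw [Module.finrank_fin_fun]; norm_num) hv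
  obtain ⟨y, hy⟩ := exists_dotProduct_eq_one (crossProduct_ne_zero_iff_linearIndependent.mpr hx)
  refine ⟨x, y, ?_⟩
  rw [triple_product_permutation, triple_product_permutation, dotProduct_comm, hy]

lemma linearIndependent_of_dotProduct_cross_eq_one {v x y : Fin 3 → K}
    (h : v ⬝ᵥ x ⨯₃ y = 1) : LinearIndependent K ![x, y, v] := by
  have hdet : det (of ![x, y, v]) = 1 := by
    rw [← h, triple_product_permutation, triple_product_eq_det]
    rfl
  exact linearIndependent_rows_iff_isUnit.mpr <|
    (isUnit_iff_isUnit_det _).mpr (hdet ▸ isUnit_one)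

end

/-- If q = v ⊗ v is a rank one symmetric tensor (v ≠ 0) on V₃ = ℂ³, the Lie algebra with
bracket b x y = (v⊗v)(x×y) is isomorphic to the Heisenberg algebra he₃: it admits a
basis X, Y, Z with b X Y = Z, b X Z = 0, b Y Z = 0. -/
theorem stmt16 (v : Fin 3 → ℂ) (hv : v ≠ 0) :
    let b : (Fin 3 → ℂ) → (Fin 3 → ℂ) → (Fin 3 → ℂ) := fun x y =>
      (Matrix.vecMulVec v v).mulVec (crossProduct x y)
    ∃ B : Module.Basis (Fin 3) ℂ (Fin 3 → ℂ),
      b (B 0) (B 1) = B 2 ∧ b (B 0) (B 2) = 0 ∧ b (B 1) (B 2) = 0 := by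
  intro b
  obtain ⟨X, Y, hXY⟩ := exists_dotProduct_cross_eq_one hv
  refine ⟨basisOfLinearIndependentOfCardEqFinrank
    (linearIndependent_of_dotProduct_cross_eq_one hXY) (by simp), ?_⟩
  simp only [b, coe_basisOfLinearIndependentOfCardEqFinrank, cons_val_zero, cons_val_one,
    cons_val_two, head_cons, tail_cons, vecMulVec_self_mulVec_cross_self, and_true]
  rw [vecMulVec_self_mulVec, hXY, one_smul]
end

section
/- Let g be a 4-dimensional complex Lie algebra. Then the derived algebra [g,g] cannot be isomorphic to the 2-dimensional non-abelian Lie algebra aff₁; more precisely, if dim [g,g] = 2 then [g,g] is abelian. -/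
/-!
Every element of the derived algebra `D = ⁅g, g⁆` is a sum of commutators, so it acts on `D`
with trace zero. A 2-dimensional Lie algebra in which every `ad x` is traceless is abelian:
if `⁅u, v⁆ ≠ 0` then `u, v` is a basis, and the traces of `ad u` and `ad v` are the
`v`-coordinate and minus the `u`-coordinate of `⁅u, v⁆`.
-/

open LinearMap (trace)
open Module

namespace LieAlgebra

variable {K L : Type*} [Field K] [LieRing L] [LieAlgebra K L]

theorem linearIndependent_pair_of_lie_ne_zero {u v : L} (huv : ⁅u, v⁆ ≠ 0) :
    LinearIndependent K ![u, v] := by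
  refine LinearIndependent.pair_iff.2 fun s t hst => ?_
  have hs : s • ⁅u, v⁆ = 0 := by simpa using congrArg (⁅·, v⁆) hst
  have ht : t • ⁅u, v⁆ = 0 := by simpa using congrArg (⁅u, ·⁆) hst
  exact ⟨(smul_eq_zero.1 hs).resolve_right huv, (smul_eq_zero.1 ht).resolve_right huv⟩

theorem isLieAbelian_of_finrank_eq_two_of_trace_ad_eq_zero (h2 : finrank K L = 2)
    (htr : ∀ x : L, trace K L (ad K L x) = 0) : IsLieAbelian L := by
  have : Module.Finite K L := finite_of_finrank_eq_succ h2
  refine ⟨fun u v => ?_⟩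
  by_contra huv
  let b := basisOfLinearIndependentOfCardEqFinrank
    (linearIndependent_pair_of_lie_ne_zero (K := K) huv) (by simp [h2])
  have hb : ⇑b = ![u, v] := coe_basisOfLinearIndependentOfCardEqFinrank _ _
  have trace_eq (f : Module.End K L) : trace K L f = b.repr (f u) 0 + b.repr (f v) 1 := by
    simp [LinearMap.trace_eq_matrix_trace K b, Matrix.trace_fin_two, LinearMap.toMatrix_apply, hb]
  have h1 : b.repr ⁅u, v⁆ 1 = 0 := by simpa [trace_eq] using htr u
  have h0 : b.repr ⁅u, v⁆ 0 = 0 := by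
    rw [← lie_skew, map_neg, Finsupp.neg_apply, neg_eq_zero]
    simpa [trace_eq] using htr v
  exact huv (b.ext_elem_iff.2 fun i => by fin_cases i <;> simpa)

end LieAlgebra

theorem stmt18_general (g : Type*) [LieRing g] [LieAlgebra ℂ g]
    (h2 : Module.finrank ℂ ↥⁅(⊤ : LieIdeal ℂ g), (⊤ : LieIdeal ℂ g)⁆ = 2) :
    IsLieAbelian ↥⁅(⊤ : LieIdeal ℂ g), (⊤ : LieIdeal ℂ g)⁆ :=
  LieAlgebra.isLieAbelian_of_finrank_eq_two_of_trace_ad_eq_zero h2 fun z =>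
    LieModule.trace_toEnd_eq_zero_of_mem_lcs ℂ g _ le_rfl z.2

/-- For a 4-dimensional complex Lie algebra g, if the derived algebra ⁅g,g⁆ has
dimension 2 then it is abelian (in particular it cannot be isomorphic to aff₁). -/
theorem stmt18 (g : Type*) [LieRing g] [LieAlgebra ℂ g] [FiniteDimensional ℂ g]
    (hdim : Module.finrank ℂ g = 4)
    (h2 : Module.finrank ℂ ↥⁅(⊤ : LieIdeal ℂ g), (⊤ : LieIdeal ℂ g)⁆ = 2) :
    IsLieAbelian ↥⁅(⊤ : LieIdeal ℂ g), (⊤ : LieIdeal ℂ g)⁆ :=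
  stmt18_general g h2
end
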